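/- For each n, let s₀ > 0 satisfy vol(D_n \ s₀B_∞ⁿ) = 1/2, where D_n is the Euclidean ball of volume 1 and B_∞ⁿ the unit cube [−1,1]ⁿ. Then s₀ ≤ 2∫_{D_n} ‖x‖_∞ dx, and hence s₀ ≤ C√(log(n+1)) for an absolute constant C. -/

import Mathlib

open MeasureTheory Metric Set
open scoped ENNReal NNReal RealInnerProductSpace

noncomputable section

abbrev E (n : ℕ) := EuclideanSpace ℝ (Fin n)

def IsConvexBody {n : ℕ} (K : Set (E n)) : Prop :=
  Convex ℝ K ∧ IsCompact K ∧ (interior K).Nonempty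

/-- Support function. -/
def suppFn {n : ℕ} (K : Set (E n)) (u : E n) : ℝ :=
  sSup ((fun y => ⟪u, y⟫) '' K)

/-- Surface area measure as a set function. -/
def surfMeas {n : ℕ} (K : Set (E n)) (Ω : Set (E n)) : ℝ≥0∞ :=
  μH[(n : ℝ) - 1] {x | x ∈ frontier K ∧ ∃ u ∈ Ω, ⟪x, u⟫ = suppFn K u}

/-- Orthogonal projection of a set onto a subspace, viewed in the ambient space. -/
def projSet {n : ℕ} (H : Submodule ℝ (E n)) (K : Set (E n)) : Set (E n) :=
  (fun x => ((H.orthogonalProjectionOnto x : H) : E n)) '' K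

/-- The Euclidean ball in ℝⁿ of volume 1. -/
def Dball (n : ℕ) : Set (E n) :=
  closedBall (0 : E n) ((volume (closedBall (0 : E n) 1)).toReal ^ (-(1 / (n : ℝ))))

/-- The cube `s·B_∞ⁿ = {x : ‖x‖_∞ ≤ s}`. -/
def supCube (n : ℕ) (s : ℝ) : Set (E n) := {x | ∀ i, |x i| ≤ s}

/-!
A point of `Dball n` outside `supCube n s` has a coordinate with `|xᵢ| > s`, so it lies in one of
the `2n` caps `{x ∈ closedBall 0 r : s ≤ ⟪±eᵢ, x⟫}`. Such a cap lies in the ball of radius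
`√(r² - s²)` about `s • u`, so its volume is at most `exp (-n s² / 2r²)` times that of the ball.
As `Dball n` has volume one and contains the cube of half-side `r / √n`, we get `4 r² ≤ n`, hence
`1/2 ≤ 2n exp (-2 s₀²)`, i.e. `s₀² ≤ log (4n) / 2`. The integral bound is Markov's inequality:
`∫_{D_n} ‖x‖_∞ ≥ s₀ vol (D_n \ s₀B_∞ⁿ) = s₀ / 2`.
-/

open Real Module

section Cap

variable {F : Type*} [NormedAddCommGroup F] [InnerProductSpace ℝ F]

theorem norm_sub_smul_sq_le {u x : F} (hu : ‖u‖ = 1) {r s : ℝ} (hs : 0 ≤ s) (hx : ‖x‖ ≤ r)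
    (hsx : s ≤ ⟪u, x⟫) : ‖x - s • u‖ ^ 2 ≤ r ^ 2 - s ^ 2 := by
  rw [norm_sub_sq_real, norm_smul, inner_smul_right, real_inner_comm, hu, norm_of_nonneg hs]
  nlinarith [norm_nonneg x]

theorem closedBall_inter_setOf_le_inner_subset {u : F} (hu : ‖u‖ = 1) {r s : ℝ} (hs : 0 ≤ s) :
    closedBall 0 r ∩ {x | s ≤ ⟪u, x⟫} ⊆ closedBall (s • u) √(r ^ 2 - s ^ 2) := by
  rintro x ⟨hx, hsx⟩
  rw [mem_closedBall_zero_iff] at hx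
  rw [mem_closedBall, dist_eq_norm]
  exact le_sqrt_of_sq_le (norm_sub_smul_sq_le hu hs hx hsx)

theorem sqrt_sq_sub_sq_le_mul_exp {r : ℝ} (hr : 0 < r) (s : ℝ) :
    √(r ^ 2 - s ^ 2) ≤ r * exp (-(s ^ 2 / (2 * r ^ 2))) := by
  rw [sqrt_le_left (by positivity), mul_pow, ← exp_nat_mul]
  calc r ^ 2 - s ^ 2 = r ^ 2 * (-(s ^ 2 / r ^ 2) + 1) := by field_simp; ring
    _ ≤ r ^ 2 * exp (-(s ^ 2 / r ^ 2)) := by gcongr; exact add_one_le_exp _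
    _ = _ := by congr 2; push_cast; ring

variable [FiniteDimensional ℝ F] [MeasurableSpace F] [BorelSpace F]
  (μ : Measure F) [μ.IsAddHaarMeasure]

theorem measure_closedBall_inter_setOf_le_inner_le {u : F} (hu : ‖u‖ = 1) {r s : ℝ} (hr : 0 < r)
    (hs : 0 ≤ s) :
    μ (closedBall 0 r ∩ {x | s ≤ ⟪u, x⟫})
      ≤ ENNReal.ofReal (exp (-(finrank ℝ F * s ^ 2 / (2 * r ^ 2)))) * μ (closedBall 0 r) := by
  have hratio : √(r ^ 2 - s ^ 2) / r ≤ exp (-(s ^ 2 / (2 * r ^ 2))) := by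
    rw [div_le_iff₀ hr, mul_comm]
    exact sqrt_sq_sub_sq_le_mul_exp hr s
  calc μ (closedBall 0 r ∩ {x | s ≤ ⟪u, x⟫})
      ≤ μ (closedBall (s • u) (√(r ^ 2 - s ^ 2) / r * r)) := by
        rw [div_mul_cancel₀ _ hr.ne']
        exact measure_mono (closedBall_inter_setOf_le_inner_subset hu hs)
    _ = ENNReal.ofReal ((√(r ^ 2 - s ^ 2) / r) ^ finrank ℝ F) * μ (closedBall 0 r) :=
        Measure.addHaar_closedBall_mul μ _ (by positivity) hr.le
    _ ≤ _ := by
      gcongr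
      calc (√(r ^ 2 - s ^ 2) / r) ^ finrank ℝ F ≤ exp (-(s ^ 2 / (2 * r ^ 2))) ^ finrank ℝ F := by
            gcongr
        _ = _ := by rw [← exp_nat_mul]; congr 1; ring

end Cap

theorem isClosed_supCube (n : ℕ) (s : ℝ) : IsClosed (supCube n s) := by
  simp only [supCube, ofPred_forall]
  exact isClosed_iInter fun i => isClosed_le (by fun_prop) continuous_const

theorem volume_supCube (n : ℕ) {a : ℝ} (ha : 0 ≤ a) :
    volume (supCube n a) = ENNReal.ofReal ((2 * a) ^ n) := by
  have : supCube n a = WithLp.ofLp ⁻¹' univ.pi fun _ : Fin n => Icc (-a) a := by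
    ext x
    simp [supCube, abs_le, forall_and, Pi.le_def]
  rw [this, (PiLp.volume_preserving_ofLp (Fin n)).measure_preimage
    (MeasurableSet.univ_pi fun _ => measurableSet_Icc).nullMeasurableSet, volume_pi_pi]
  simp only [Real.volume_Icc, Finset.prod_const, Finset.card_univ, Fintype.card_fin, sub_neg_eq_add,
    ← two_mul, ENNReal.ofReal_pow (by positivity : (0:ℝ) ≤ 2 * a)]

theorem supCube_subset_closedBall (n : ℕ) {r : ℝ} (hr : 0 ≤ r) :
    supCube n (r / √n) ⊆ closedBall 0 r := by
  intro x hx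
  rw [mem_closedBall_zero_iff, EuclideanSpace.norm_eq, sqrt_le_left hr]
  calc ∑ i, ‖x i‖ ^ 2 ≤ ∑ _i : Fin n, (r / √n) ^ 2 := by
        gcongr with i
        exact hx i
    _ ≤ r ^ 2 := by
      rcases n.eq_zero_or_pos with rfl | hn
      · simp [sq_nonneg]
      · rw [Finset.sum_const, Finset.card_univ, Fintype.card_fin, nsmul_eq_mul, div_pow,
          sq_sqrt n.cast_nonneg, mul_div_cancel₀ _ (by positivity)]

section Dball

def dballRadius (n : ℕ) : ℝ := (volume (closedBall (0 : E n) 1)).toReal ^ (-(1 / (n : ℝ)))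

variable {n : ℕ}

theorem Dball_eq_closedBall (n : ℕ) : Dball n = closedBall 0 (dballRadius n) := rfl

theorem dballRadius_pos (n : ℕ) : 0 < dballRadius n :=
  rpow_pos_of_pos (ENNReal.toReal_pos (measure_closedBall_pos _ _ one_pos).ne'
    measure_closedBall_lt_top.ne) _

theorem volume_Dball (hn : 0 < n) : volume (Dball n) = 1 := by
  have hr := dballRadius_pos n
  have hω : volume (closedBall (0 : E n) 1) ≠ ⊤ := measure_closedBall_lt_top.ne
  have hω₀ : (volume (closedBall (0 : E n) 1)).toReal ≠ 0 :=
    (ENNReal.toReal_pos (measure_closedBall_pos _ _ one_pos).ne' hω).ne'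
  rw [Dball_eq_closedBall, Measure.addHaar_closedBall' _ _ hr.le,
    finrank_euclideanSpace_fin, ← ENNReal.ofReal_toReal hω, ← ENNReal.ofReal_mul (by positivity),
    ← ENNReal.ofReal_one, dballRadius, ← rpow_natCast, ← rpow_mul ENNReal.toReal_nonneg,
    show -(1 / (n : ℝ)) * n = -1 by field_simp, rpow_neg_one, inv_mul_cancel₀ hω₀]

theorem four_mul_dballRadius_sq_le (hn : 0 < n) : 4 * dballRadius n ^ 2 ≤ n := by
  have hr := dballRadius_pos n
  have h := measure_mono (μ := volume) (supCube_subset_closedBall n hr.le)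
  rw [← Dball_eq_closedBall, volume_Dball hn, volume_supCube n (by positivity),
    ENNReal.ofReal_le_one, pow_le_one_iff_of_nonneg (by positivity) hn.ne', mul_div_assoc',
    div_le_one (by positivity)] at h
  calc 4 * dballRadius n ^ 2 = (2 * dballRadius n) ^ 2 := by ring
    _ ≤ √n ^ 2 := by gcongr
    _ = n := sq_sqrt n.cast_nonneg

theorem closedBall_diff_supCube_subset_iUnion (n : ℕ) (r : ℝ) {s : ℝ} :
    closedBall 0 r \ supCube n s ⊆
      ⋃ i, (closedBall 0 r ∩ {x | s ≤ ⟪EuclideanSpace.single i 1, x⟫}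
        ∪ closedBall 0 r ∩ {x | s ≤ ⟪-EuclideanSpace.single i 1, x⟫}) := by
  rintro x ⟨hx, hxs⟩
  simp only [supCube, mem_ofPred_eq, not_forall, not_le] at hxs
  obtain ⟨i, hi⟩ := hxs
  refine mem_iUnion.2 ⟨i, ?_⟩
  rcases le_or_gt 0 (x i) with h | h
  · left
    simpa [hx, EuclideanSpace.inner_single_left, abs_of_nonneg h] using hi.le
  · right
    simpa [hx, EuclideanSpace.inner_single_left, abs_of_neg h] using hi.le

theorem volume_Dball_diff_supCube_le (hn : 0 < n) {s : ℝ} (hs : 0 ≤ s) :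
    volume (Dball n \ supCube n s) ≤ ENNReal.ofReal (2 * n * exp (-(2 * s ^ 2))) := by
  have hcap : ∀ u : E n, ‖u‖ = 1 →
      volume (Dball n ∩ {x | s ≤ ⟪u, x⟫}) ≤ ENNReal.ofReal (exp (-(2 * s ^ 2))) := by
    intro u hu
    refine (measure_closedBall_inter_setOf_le_inner_le volume hu (dballRadius_pos n) hs).trans ?_
    rw [← Dball_eq_closedBall, volume_Dball hn, mul_one, finrank_euclideanSpace_fin]
    have hr := dballRadius_pos n
    gcongr
    rw [le_div_iff₀ (by positivity)]
    nlinarith [four_mul_dballRadius_sq_le hn, sq_nonneg s]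
  calc volume (Dball n \ supCube n s)
      ≤ ∑ i : Fin n, volume (Dball n ∩ {x | s ≤ ⟪EuclideanSpace.single i 1, x⟫}
          ∪ Dball n ∩ {x | s ≤ ⟪-EuclideanSpace.single i 1, x⟫}) :=
        (measure_mono (closedBall_diff_supCube_subset_iUnion n _)).trans
          (measure_iUnion_fintype_le _ _)
    _ ≤ ∑ _i : Fin n, 2 * ENNReal.ofReal (exp (-(2 * s ^ 2))) := by
        gcongr with i
        refine (measure_union_le _ _).trans ?_
        rw [two_mul]
        gcongr <;> exact hcap _ (by simp)
    _ = ENNReal.ofReal (2 * n * exp (-(2 * s ^ 2))) := by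
        simp only [Finset.sum_const, Finset.card_univ, Fintype.card_fin, nsmul_eq_mul]
        rw [ENNReal.ofReal_mul (by positivity), ENNReal.ofReal_mul (by positivity),
          ENNReal.ofReal_natCast, ENNReal.ofReal_ofNat]
        ring

theorem integrableOn_iSup_abs_Dball (n : ℕ) :
    IntegrableOn (fun x : E n => ⨆ i, |x i|) (Dball n) := by
  refine Measure.integrableOn_of_bounded (M := dballRadius n) measure_closedBall_lt_top.ne
    (Measurable.iSup fun i => by fun_prop).aestronglyMeasurable
    (ae_restrict_of_forall_mem measurableSet_closedBall fun x hx => ?_)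
  rw [norm_of_nonneg (Real.iSup_nonneg fun _ => abs_nonneg _)]
  exact (Real.iSup_le (fun i => PiLp.norm_apply_le x i) (norm_nonneg x)).trans
    (mem_closedBall_zero_iff.1 hx)

theorem le_two_mul_setIntegral_of_volume_diff_eq_half {s : ℝ}
    (hvol : volume (Dball n \ supCube n s) = 1 / 2) : s ≤ 2 * ∫ x in Dball n, ⨆ i, |x i| := by
  have hint := integrableOn_iSup_abs_Dball n
  have hlow : s * volume.real (Dball n \ supCube n s)
      ≤ ∫ x in Dball n \ supCube n s, ⨆ i, |x i| := by
    refine setIntegral_ge_of_const_le_real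
      (measurableSet_closedBall.diff (isClosed_supCube n s).measurableSet) (by simp [hvol])
      (fun x hx => ?_) (hint.mono_set sdiff_subset)
    obtain ⟨i, hi⟩ : ∃ i, s < |x i| := by simpa [supCube] using hx.2
    exact hi.le.trans (le_ciSup (f := fun i => |x i|) (Finite.bddAbove_range _) i)
  have hmono : ∫ x in Dball n \ supCube n s, ⨆ i, |x i| ≤ ∫ x in Dball n, ⨆ i, |x i| :=
    setIntegral_mono_set hint (ae_of_all _ fun x => Real.iSup_nonneg fun _ => abs_nonneg _)
      sdiff_subset.eventuallyLE
  rw [measureReal_def, hvol] at hlow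
  norm_num at hlow
  linarith

theorem le_two_mul_sqrt_log_of_volume_diff_eq_half (hn : 0 < n) {s : ℝ} (hs : 0 ≤ s)
    (hvol : volume (Dball n \ supCube n s) = 1 / 2) : s ≤ 2 * √(log (n + 1)) := by
  have h := volume_Dball_diff_supCube_le hn hs
  have hhalf : 1 / 2 ≤ 2 * n * exp (-(2 * s ^ 2)) := by
    rwa [hvol, show (1 / 2 : ℝ≥0∞) = ENNReal.ofReal (1 / 2) by
      rw [ENNReal.ofReal_div_of_pos two_pos, ENNReal.ofReal_one, ENNReal.ofReal_ofNat],
      ENNReal.ofReal_le_ofReal_iff (by positivity)] at h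
  have hexp : exp (2 * s ^ 2) ≤ (n + 1) ^ 3 := by
    have hn1 : (1 : ℝ) ≤ n := Nat.one_le_cast.2 hn
    have hcube : 4 * (n : ℝ) ≤ (n + 1) ^ 3 := by nlinarith [sq_nonneg ((n : ℝ) - 1)]
    rw [exp_neg, ← div_eq_mul_inv, le_div_iff₀ (exp_pos _)] at hhalf
    linarith
  have hlog : 2 * s ^ 2 ≤ 3 * log (n + 1) := by
    rw [← log_exp (2 * s ^ 2), show (3 : ℝ) = (3 : ℕ) by norm_num, ← log_pow]
    exact log_le_log (exp_pos _) hexp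
  have hlog₀ : 0 ≤ log (n + 1) := log_nonneg (by linarith [n.cast_nonneg (α := ℝ)])
  calc s ≤ √(2 ^ 2 * log (n + 1)) := le_sqrt_of_sq_le (by linarith)
    _ = 2 * √(log (n + 1)) := by rw [sqrt_mul (by norm_num), sqrt_sq (by norm_num)]

end Dball

/-- if `s₀ > 0` satisfies `vol(D_n \ s₀ B_∞ⁿ) = 1/2`, then
`s₀ ≤ 2 ∫_{D_n} ‖x‖_∞ dx`, and hence `s₀ ≤ C √(log (n+1))` for an absolute constant. -/
theorem median_of_sup_norm_bound :
    ∃ C : ℝ, 0 < C ∧ ∀ (n : ℕ), 0 < n → ∀ s₀ : ℝ, 0 < s₀ →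
      volume (Dball n \ supCube n s₀) = 1 / 2 →
      s₀ ≤ 2 * ∫ x in Dball n, (⨆ i, |x i|) ∧
      s₀ ≤ C * Real.sqrt (Real.log (n + 1)) :=
  ⟨2, two_pos, fun _ hn _ hs₀ hvol =>
    ⟨le_two_mul_setIntegral_of_volume_diff_eq_half hvol,
      le_two_mul_sqrt_log_of_volume_diff_eq_half hn hs₀.le hvol⟩⟩
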